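/- arXiv:2411.08643 — 8 statements merged into one kernel-verified Lean document; each statement's English description precedes it below -/
import Mathlib

section
/- Let a ≥ 2 be a real number, and let x ≥ 0 and ε > 0 satisfy x + ε ≤ 1. Then 1 < ζ_a'(x + ε)/ζ_a'(x) ≤ (1 + εa)², where ζ_a'(t) = a/(a − (a−1)t)² denotes the derivative of ζ_a(t) = t/(a − (a−1)t). -/
/-!
Write `D t = a - (a - 1) t`, so that `ζ_a'(t) = a / D t ^ 2` and the ratio is `(D x / D (x + ε)) ^ 2`.
Since `D x = D (x + ε) + (a - 1) ε` and `D (x + ε) ≥ 1` because `x + ε ≤ 1`, the base ratio lies strictly above `1`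
and at most at `1 + (a - 1) ε ≤ 1 + ε a`.
-/

lemma div_sq_div_div_sq {a : ℝ} (ha : a ≠ 0) (p q : ℝ) :
    (a / p ^ 2) / (a / q ^ 2) = (q / p) ^ 2 := by
  rw [div_pow, div_div_div_cancel_left' _ _ ha]

lemma one_le_sub_sub_one_mul {a t : ℝ} (ha : 1 ≤ a) (ht : t ≤ 1) : 1 ≤ a - (a - 1) * t := by
  nlinarith

lemma one_lt_add_div_self {p d : ℝ} (hp : 0 < p) (hd : 0 < d) : 1 < (p + d) / p := by
  rw [one_lt_div hp]
  linarith

lemma add_div_self_le_one_add {p d : ℝ} (hp : 1 ≤ p) (hd : 0 ≤ d) : (p + d) / p ≤ 1 + d := by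
  rw [div_le_iff₀ (by linarith)]
  nlinarith

theorem yoccoz_zeta_deriv_ratio_bound_general (a x ε : ℝ) (ha : 2 ≤ a) (hε : 0 < ε)
    (hxε : x + ε ≤ 1) :
    1 < (a / (a - (a - 1) * (x + ε)) ^ 2) / (a / (a - (a - 1) * x) ^ 2) ∧
    (a / (a - (a - 1) * (x + ε)) ^ 2) / (a / (a - (a - 1) * x) ^ 2) ≤ (1 + ε * a) ^ 2 := by
  set p := a - (a - 1) * (x + ε)
  have hp : 1 ≤ p := one_le_sub_sub_one_mul (by linarith) hxε
  have hd : 0 < (a - 1) * ε := mul_pos (by linarith) hε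
  have hshift : a - (a - 1) * x = p + (a - 1) * ε := by ring
  rw [div_sq_div_div_sq (by positivity), hshift]
  constructor
  · exact one_lt_pow₀ (one_lt_add_div_self (by linarith) hd) two_ne_zero
  · calc ((p + (a - 1) * ε) / p) ^ 2 ≤ (1 + (a - 1) * ε) ^ 2 :=
          pow_le_pow_left₀ (by positivity) (add_div_self_le_one_add hp hd.le) 2
      _ ≤ (1 + ε * a) ^ 2 := pow_le_pow_left₀ (by positivity) (by nlinarith) 2

/-- Derivative distortion bound for `ζ_a` (Proposition 2.4, first estimate):
for `a ≥ 2`, `x ≥ 0`, `ε > 0` with `x + ε ≤ 1`, one has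
`1 < ζ_a'(x+ε)/ζ_a'(x) ≤ (1 + εa)²` where `ζ_a'(t) = a/(a-(a-1)t)²`. -/
theorem yoccoz_zeta_deriv_ratio_bound (a x ε : ℝ) (ha : 2 ≤ a) (hx : 0 ≤ x) (hε : 0 < ε)
    (hxε : x + ε ≤ 1) :
    1 < (a / (a - (a - 1) * (x + ε)) ^ 2) / (a / (a - (a - 1) * x) ^ 2) ∧
    (a / (a - (a - 1) * (x + ε)) ^ 2) / (a / (a - (a - 1) * x) ^ 2) ≤ (1 + ε * a) ^ 2 :=
  yoccoz_zeta_deriv_ratio_bound_general a x ε ha hε hxε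
end

section
/- Let a ≥ 2 be a real number, and let x ≥ 0 and ε > 0 satisfy x + ε ≤ 1. Then ε³a/((1 + εa)²(1 − x)²) ≤ ζ_a(x + ε) − ζ_a(x) ≤ ε(1 + εa)²/(a(1 − x)²), where ζ_a(t) = t/(a − (a−1)t). (Note that x < 1, so 1 − x > 0.) -/
/-!
Writing `D t = a - (a - 1) t = 1 + (a - 1)(1 - t)`, the increment is
`ζ_a(x + ε) - ζ_a(x) = ε a / (D(x + ε) D(x))`, so both estimates reduce to bounding the
denominators `D(x + ε) ≤ D(x)` above by `(1 + ε a)(1 - x) / ε` and below by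
`a (1 - x) / (1 + ε a)`.
-/

noncomputable def zeta (a t : ℝ) : ℝ := t / (a - (a - 1) * t)

section ZetaDenominator

variable {a x ε : ℝ}

lemma zeta_denom_pos {t : ℝ} (ha : 1 ≤ a) (ht : t ≤ 1) : 0 < a - (a - 1) * t := by
  nlinarith

lemma zeta_denom_anti {s t : ℝ} (ha : 1 ≤ a) (hst : s ≤ t) :
    a - (a - 1) * t ≤ a - (a - 1) * s := by
  nlinarith

lemma zeta_sub_zeta {s t : ℝ} (hs : a - (a - 1) * s ≠ 0) (ht : a - (a - 1) * t ≠ 0) :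
    zeta a t - zeta a s = a * (t - s) / ((a - (a - 1) * t) * (a - (a - 1) * s)) := by
  rw [zeta, zeta, div_sub_div _ _ ht hs]
  congr 1
  ring

lemma mul_zeta_denom_le (hε : 0 ≤ ε) (hxε : x + ε ≤ 1) :
    ε * (a - (a - 1) * x) ≤ (1 + ε * a) * (1 - x) := by
  nlinarith [mul_nonneg hε (by linarith : (0 : ℝ) ≤ 1 - x - ε)]

lemma mul_le_zeta_denom_add (ha : 1 ≤ a) (hx : 0 ≤ x) (hε : 0 ≤ ε) (hxε : x + ε ≤ 1) :
    a * (1 - x) ≤ (1 + ε * a) * (a - (a - 1) * (x + ε)) := by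
  nlinarith [mul_nonneg (mul_nonneg hε (by linarith : (0 : ℝ) ≤ a))
    (mul_nonneg (by linarith : (0 : ℝ) ≤ a - 1) (by linarith : (0 : ℝ) ≤ 1 - x - ε))]

lemma sq_mul_zeta_denoms_le (ha : 1 ≤ a) (hε : 0 ≤ ε) (hxε : x + ε ≤ 1) :
    ε ^ 2 * ((a - (a - 1) * (x + ε)) * (a - (a - 1) * x)) ≤ ((1 + ε * a) * (1 - x)) ^ 2 := by
  have h₀ := mul_zeta_denom_le (a := a) hε hxε
  have h₁ : ε * (a - (a - 1) * (x + ε)) ≤ (1 + ε * a) * (1 - x) :=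
    (mul_le_mul_of_nonneg_left (zeta_denom_anti ha (by linarith)) hε).trans h₀
  have h₁' : 0 ≤ ε * (a - (a - 1) * (x + ε)) :=
    mul_nonneg hε (zeta_denom_pos ha hxε).le
  calc ε ^ 2 * ((a - (a - 1) * (x + ε)) * (a - (a - 1) * x))
      = (ε * (a - (a - 1) * (x + ε))) * (ε * (a - (a - 1) * x)) := by ring
    _ ≤ ((1 + ε * a) * (1 - x)) * ((1 + ε * a) * (1 - x)) :=
        mul_le_mul h₁ h₀ (mul_nonneg hε (zeta_denom_pos ha (by linarith)).le) (h₁'.trans h₁)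
    _ = ((1 + ε * a) * (1 - x)) ^ 2 := by ring

lemma sq_le_mul_zeta_denoms (ha : 1 ≤ a) (hx : 0 ≤ x) (hε : 0 ≤ ε) (hxε : x + ε ≤ 1) :
    (a * (1 - x)) ^ 2 ≤ (1 + ε * a) ^ 2 * ((a - (a - 1) * (x + ε)) * (a - (a - 1) * x)) := by
  have h₁ := mul_le_zeta_denom_add ha hx hε hxε
  have h₀ : a * (1 - x) ≤ (1 + ε * a) * (a - (a - 1) * x) :=
    h₁.trans (mul_le_mul_of_nonneg_left (zeta_denom_anti ha (by linarith)) (by positivity))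
  have hpos : 0 ≤ a * (1 - x) := mul_nonneg (by linarith) (by linarith)
  calc (a * (1 - x)) ^ 2 = (a * (1 - x)) * (a * (1 - x)) := by ring
    _ ≤ ((1 + ε * a) * (a - (a - 1) * (x + ε))) * ((1 + ε * a) * (a - (a - 1) * x)) :=
        mul_le_mul h₁ h₀ hpos (hpos.trans h₁)
    _ = (1 + ε * a) ^ 2 * ((a - (a - 1) * (x + ε)) * (a - (a - 1) * x)) := by ring

end ZetaDenominator

/-- Increment bound for `ζ_a` (Proposition 2.4, second estimate): for `a ≥ 2`, `x ≥ 0`,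
`ε > 0` with `x + ε ≤ 1`, one has
`ε³a/((1+εa)²(1-x)²) ≤ ζ_a(x+ε) - ζ_a(x) ≤ ε(1+εa)²/(a(1-x)²)`
where `ζ_a(t) = t/(a-(a-1)t)`. -/
theorem yoccoz_zeta_increment_bound (a x ε : ℝ) (ha : 2 ≤ a) (hx : 0 ≤ x) (hε : 0 < ε)
    (hxε : x + ε ≤ 1) :
    ε ^ 3 * a / ((1 + ε * a) ^ 2 * (1 - x) ^ 2)
      ≤ (x + ε) / (a - (a - 1) * (x + ε)) - x / (a - (a - 1) * x) ∧
    (x + ε) / (a - (a - 1) * (x + ε)) - x / (a - (a - 1) * x)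
      ≤ ε * (1 + ε * a) ^ 2 / (a * (1 - x) ^ 2) := by
  have ha₁ : 1 ≤ a := by linarith
  have hD₁ := zeta_denom_pos ha₁ hxε
  have hD₀ := zeta_denom_pos (t := x) ha₁ (by linarith)
  have hu : 0 < 1 - x := by linarith
  have hincr : zeta a (x + ε) - zeta a x
      = ε * a / ((a - (a - 1) * (x + ε)) * (a - (a - 1) * x)) := by
    rw [zeta_sub_zeta hD₀.ne' hD₁.ne', add_sub_cancel_left, mul_comm a]
  change _ ≤ zeta a (x + ε) - zeta a x ∧ zeta a (x + ε) - zeta a x ≤ _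
  rw [hincr]
  constructor
  · calc ε ^ 3 * a / ((1 + ε * a) ^ 2 * (1 - x) ^ 2)
        ≤ ε ^ 3 * a / (ε ^ 2 * ((a - (a - 1) * (x + ε)) * (a - (a - 1) * x))) := by
          refine div_le_div_of_nonneg_left (by positivity) (by positivity) ?_
          simpa only [mul_pow] using sq_mul_zeta_denoms_le ha₁ hε.le hxε
      _ = ε * a / ((a - (a - 1) * (x + ε)) * (a - (a - 1) * x)) := by
          field_simp
  · calc ε * a / ((a - (a - 1) * (x + ε)) * (a - (a - 1) * x))
        = ε * a * (1 + ε * a) ^ 2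
            / ((1 + ε * a) ^ 2 * ((a - (a - 1) * (x + ε)) * (a - (a - 1) * x))) := by
          field_simp
      _ ≤ ε * a * (1 + ε * a) ^ 2 / (a * (1 - x)) ^ 2 :=
          div_le_div_of_nonneg_left (by positivity) (by positivity)
            (sq_le_mul_zeta_denoms ha₁ hx hε.le hxε)
      _ = ε * (1 + ε * a) ^ 2 / (a * (1 - x) ^ 2) := by
          field_simp
end

section
/- Let c ≥ 0 be a real number and let L_c : ℂ → ℂ be the ℝ-linear map L_c(z) = z + c·Im(z). Then L_c is an ℝ-linear automorphism of ℂ with inverse z ↦ z − c·Im(z), and the product of the operator norms of L_c and of its inverse equals ((c + √(c² + 4))/2)², which equals (√(c² + 4) + c)/(√(c² + 4) − c). -/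
/-!
The top singular value of the shear `z ↦ z + t·Im z` (for `t ≥ 0`) is the positive root `s` of
`s² = t s + 1`, i.e. `s = (t + √(t² + 4))/2`, attained at `1 + s i`. The inverse shear is the
conjugate of the shear by complex conjugation, an isometry, so it has the same norm.
-/

namespace Real

theorem sqrt_sq_add_four_gt (t : ℝ) : |t| < √(t ^ 2 + 4) := by
  rw [← sqrt_sq_eq_abs]
  exact sqrt_lt_sqrt (sq_nonneg t) (by linarith)

theorem half_add_sqrt_sq_add_four_sq (t : ℝ) :
    ((t + √(t ^ 2 + 4)) / 2) ^ 2 = t * ((t + √(t ^ 2 + 4)) / 2) + 1 := by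
  have := sq_sqrt (show 0 ≤ t ^ 2 + 4 by positivity)
  linear_combination this / 4

theorem half_add_sqrt_sq_add_four_pos (t : ℝ) : 0 < (t + √(t ^ 2 + 4)) / 2 := by
  linarith [neg_abs_le t, sqrt_sq_add_four_gt t]

theorem half_add_sqrt_sq_add_four_sq_eq_div (t : ℝ) :
    ((t + √(t ^ 2 + 4)) / 2) ^ 2 = (√(t ^ 2 + 4) + t) / (√(t ^ 2 + 4) - t) := by
  have hpos : 0 < √(t ^ 2 + 4) - t := by linarith [le_abs_self t, sqrt_sq_add_four_gt t]
  rw [eq_div_iff hpos.ne']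
  linear_combination (√(t ^ 2 + 4) + t) / 4 * sq_sqrt (show 0 ≤ t ^ 2 + 4 by positivity)

end Real

open Real

namespace Complex

noncomputable def shear (t : ℝ) : ℂ →L[ℝ] ℂ :=
  ContinuousLinearMap.id ℝ ℂ + t • ofRealCLM.comp imCLM

@[simp]
theorem shear_apply (t : ℝ) (z : ℂ) : shear t z = z + (t * z.im : ℝ) := by
  simp [shear]

@[simp]
theorem shear_re (t : ℝ) (z : ℂ) : (shear t z).re = z.re + t * z.im := by simp

@[simp]
theorem shear_im (t : ℝ) (z : ℂ) : (shear t z).im = z.im := by simp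

theorem shear_shear (s t : ℝ) (z : ℂ) : shear s (shear t z) = shear (s + t) z := by
  apply Complex.ext <;> simp only [shear_re, shear_im]; ring

theorem shear_zero_apply (z : ℂ) : shear 0 z = z := by simp

theorem norm_shear_neg (t : ℝ) : ‖shear (-t)‖ = ‖shear t‖ := by
  have : shear (-t) = conjLIE.toLinearIsometry.toContinuousLinearMap.comp
      ((shear t).comp (conjLIE : ℂ →L[ℝ] ℂ)) := by
    ext z; simp
  rw [this, conjLIE.toLinearIsometry.norm_toContinuousLinearMap_comp,
    ContinuousLinearMap.opNorm_comp_linearIsometryEquiv]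

theorem norm_shear_of_sq_eq {t s : ℝ} (ht : 0 ≤ t) (hs : 0 < s) (hst : s ^ 2 = t * s + 1) :
    ‖shear t‖ = s := by
  have norm_sq (w : ℂ) : ‖w‖ ^ 2 = w.re ^ 2 + w.im ^ 2 := by
    rw [Complex.sq_norm, normSq_apply]; ring
  refine ContinuousLinearMap.opNorm_eq_of_bounds hs.le (fun z => ?_) (fun N _ hN => ?_)
  · have gap : s * ((s * ‖z‖) ^ 2 - ‖shear t z‖ ^ 2) = t * (s * z.re - z.im) ^ 2 := by
      rw [mul_pow, norm_sq, norm_sq, shear_re, shear_im]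
      linear_combination (s * z.re ^ 2 + s * z.im ^ 2 + t * z.im ^ 2) * hst
    have : ‖shear t z‖ ^ 2 ≤ (s * ‖z‖) ^ 2 := by
      nlinarith [mul_nonneg ht (sq_nonneg (s * z.re - z.im))]
    exact (pow_le_pow_iff_left₀ (norm_nonneg _) (by positivity) two_ne_zero).mp this
  · -- `shear t (1 + s i) = s (s + i)`, so `1 + s i` realizes the bound.
    set w : ℂ := ⟨1, s⟩
    have hw : ‖shear t w‖ = s * ‖w‖ := by
      have : ‖shear t w‖ ^ 2 = (s * ‖w‖) ^ 2 := by
        rw [mul_pow, norm_sq, norm_sq, shear_re, shear_im]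
        linear_combination -(s ^ 2 + t * s + 1) * hst
      exact (pow_left_inj₀ (norm_nonneg _) (by positivity) two_ne_zero).mp this
    have hw0 : 0 < ‖w‖ := norm_pos_iff.mpr fun h => by simpa [w] using congrArg re h
    exact le_of_mul_le_mul_right (hw ▸ hN w) hw0

theorem norm_shear {t : ℝ} (ht : 0 ≤ t) : ‖shear t‖ = (t + √(t ^ 2 + 4)) / 2 :=
  norm_shear_of_sq_eq ht (half_add_sqrt_sq_add_four_pos t) (half_add_sqrt_sq_add_four_sq t)

end Complex

open Complex

/-- The shear map `L_c(z) = z + c·Im(z)` is an `ℝ`-linear automorphism of `ℂ` with inverse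
`z ↦ z - c·Im(z)`, and the product of the operator norms of `L_c` and its inverse equals
`((c + √(c² + 4))/2)²`, which equals `(√(c² + 4) + c)/(√(c² + 4) - c)`. -/
theorem shear_map_dilatation (c : ℝ) (hc : 0 ≤ c) (L M : ℂ →L[ℝ] ℂ)
    (hL : ∀ z : ℂ, L z = z + (c * z.im : ℝ))
    (hM : ∀ z : ℂ, M z = z - (c * z.im : ℝ)) :
    (∀ z : ℂ, M (L z) = z) ∧ (∀ z : ℂ, L (M z) = z) ∧
    ‖L‖ * ‖M‖ = ((c + Real.sqrt (c ^ 2 + 4)) / 2) ^ 2 ∧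
    ((c + Real.sqrt (c ^ 2 + 4)) / 2) ^ 2
      = (Real.sqrt (c ^ 2 + 4) + c) / (Real.sqrt (c ^ 2 + 4) - c) := by
  obtain rfl : L = shear c := ContinuousLinearMap.ext fun z => by rw [hL, shear_apply]
  obtain rfl : M = shear (-c) := ContinuousLinearMap.ext fun z => by
    rw [hM, shear_apply]; push_cast; ring
  refine ⟨fun z => ?_, fun z => ?_, ?_, Real.half_add_sqrt_sq_add_four_sq_eq_div c⟩
  · rw [shear_shear, neg_add_cancel, shear_zero_apply]
  · rw [shear_shear, add_neg_cancel, shear_zero_apply]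
  · rw [norm_shear_neg, norm_shear hc, ← sq]
end

section
/- Let (a_k)_{k≥1} be a sequence of positive integers and define q_0 = 1, q_1 = a_1, q_{n+1} = a_{n+1}q_n + q_{n−1} for n ≥ 1. Define a real sequence (b_k)_{k≥1} by: b_k = a_k if a_k ≠ 1; and if a_k = 1, letting ℓ ≥ 1 be the unique integer such that a_{k−i} = 1 for all 0 ≤ i < ℓ and either k = ℓ or a_{k−ℓ} ≠ 1, set b_k = F_ℓ/F_{ℓ−1}. Then for all n ≥ 1, ∏_{k=1}^n b_k ≤ q_n ≤ ∏_{k=1}^n (a_k + 1). -/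
/-!
With `q_{-1} = 0`, the upper bound follows from `q_{n-1} ≤ q_n`, which gives
`q_{n+1} ≤ (a_{n+1} + 1) q_n`. For the lower bound one carries along, besides `∏ b_k ≤ q_n`, the
inequality `(∏ b_k) · r ≤ q_n + q_{n-1}`, where `r = F_{ℓ+1} / F_ℓ` is the value `b_{n+1}` would
take if `a_{n+1} = 1` (with `ℓ` the length of the run of ones ending at `n`). A step with
`a_{n+1} ≠ 1` resets `r` to `1`; a step with `a_{n+1} = 1` gives `q_{n+1} = q_n + q_{n-1}` and
turns `r` into `1 + 1/r`, and both inequalities survive.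
-/

open Finset

def onesRunLength (a : ℕ → ℕ) : ℕ → ℕ
  | 0 => 0
  | k + 1 => if a (k + 1) = 1 then onesRunLength a k + 1 else 0

namespace onesRunLength

variable {a : ℕ → ℕ} {k : ℕ}

theorem succ_of_eq_one (h : a (k + 1) = 1) : onesRunLength a (k + 1) = onesRunLength a k + 1 :=
  if_pos h

theorem succ_of_ne_one (h : a (k + 1) ≠ 1) : onesRunLength a (k + 1) = 0 :=
  if_neg h

theorem le_self (a : ℕ → ℕ) : ∀ k, onesRunLength a k ≤ k
  | 0 => le_rfl
  | k + 1 => by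
    unfold onesRunLength
    split
    · exact Nat.succ_le_succ (le_self a k)
    · exact Nat.zero_le _

theorem eq_one_of_lt (a : ℕ → ℕ) : ∀ k i, i < onesRunLength a k → a (k - i) = 1
  | 0, _, hi => absurd hi (Nat.not_lt_zero _)
  | k + 1, i, hi => by
    by_cases hk : a (k + 1) = 1
    · rw [succ_of_eq_one hk] at hi
      rcases i with _ | i
      · exact hk
      · simpa using eq_one_of_lt a k i (by omega)
    · rw [succ_of_ne_one hk] at hi
      omega

theorem eq_self_or_ne_one (a : ℕ → ℕ) :
    ∀ k, k = onesRunLength a k ∨ a (k - onesRunLength a k) ≠ 1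
  | 0 => Or.inl rfl
  | k + 1 => by
    by_cases hk : a (k + 1) = 1
    · rw [succ_of_eq_one hk, Nat.add_sub_add_right]
      exact (eq_self_or_ne_one a k).imp (by omega) id
    · rw [succ_of_ne_one hk]
      exact Or.inr hk

end onesRunLength

theorem eq_fib_add_one {F : ℕ → ℕ} (hF0 : F 0 = 1) (hF1 : F 1 = 1)
    (hF : ∀ j, F (j + 2) = F (j + 1) + F j) : ∀ j, F j = Nat.fib (j + 1)
  | 0 => hF0
  | 1 => hF1
  | j + 2 => by
    rw [hF, eq_fib_add_one hF0 hF1 hF (j + 1), eq_fib_add_one hF0 hF1 hF j,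
      Nat.fib_add_two (n := j + 1), add_comm]

noncomputable def fibRatio (ℓ : ℕ) : ℝ := Nat.fib (ℓ + 2) / Nat.fib (ℓ + 1)

theorem fibRatio_zero : fibRatio 0 = 1 := by
  norm_num [fibRatio]

theorem fibRatio_pos (ℓ : ℕ) : 0 < fibRatio ℓ := by
  unfold fibRatio
  have := Nat.fib_pos.mpr (Nat.succ_pos (ℓ + 1))
  have := Nat.fib_pos.mpr (Nat.succ_pos ℓ)
  positivity

theorem fibRatio_succ (ℓ : ℕ) : fibRatio (ℓ + 1) = 1 + (fibRatio ℓ)⁻¹ := by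
  have hpos : (0 : ℝ) < Nat.fib (ℓ + 2) := by exact_mod_cast Nat.fib_pos.mpr (Nat.succ_pos _)
  rw [fibRatio, fibRatio, inv_div, Nat.fib_add_two (n := ℓ + 1), Nat.cast_add]
  field_simp
  ring

/-- The invariant of the lower bound at step `m`: `x = ∏_{k ≤ m} b_k`, `u = q_m`, `v = q_{m-1}`,
and `r` is the value `b_{m+1}` takes if `a_{m+1} = 1`. -/
def LowerBoundInv (x u v r : ℝ) : Prop := x ≤ u ∧ x * r ≤ u + v

namespace LowerBoundInv

variable {x u v r : ℝ}

theorem step_of_ne_one (h : LowerBoundInv x u v r) (hu : 0 ≤ u) (hv : 0 ≤ v) {c : ℝ}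
    (hc : 0 ≤ c) : LowerBoundInv (x * c) (c * u + v) u 1 := by
  have hxc : x * c ≤ c * u := by nlinarith [h.1]
  constructor <;> linarith

theorem step_of_eq_one (h : LowerBoundInv x u v r) (hr : 0 < r) :
    LowerBoundInv (x * r) (u + v) u (1 + r⁻¹) := by
  have hexpand : x * r * (1 + r⁻¹) = x * r + x := by field_simp
  exact ⟨h.2, by linarith [h.1, h.2]⟩

end LowerBoundInv

section Continuant

-- `p n` plays the role of `q_{n-1}`, with `q_{-1} = 0`.

variable {a q p : ℕ → ℕ}

theorem lowerBoundInv_prod {b : ℕ → ℝ} (hq0 : q 0 = 1) (hp0 : p 0 = 0)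
    (hq : ∀ n, q (n + 1) = a (n + 1) * q n + p n) (hp : ∀ n, p (n + 1) = q n)
    (hb_ne : ∀ k, a (k + 1) ≠ 1 → b (k + 1) = a (k + 1))
    (hb_eq : ∀ k, a (k + 1) = 1 → b (k + 1) = fibRatio (onesRunLength a k)) :
    ∀ m, LowerBoundInv (∏ k ∈ Icc 1 m, b k) (q m) (p m) (fibRatio (onesRunLength a m))
  | 0 => by simp [LowerBoundInv, hq0, hp0, onesRunLength, fibRatio_zero]
  | m + 1 => by
    have ih := lowerBoundInv_prod hq0 hp0 hq hp hb_ne hb_eq m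
    rw [prod_Icc_succ_top (Nat.le_add_left 1 m), hq, hp, Nat.cast_add, Nat.cast_mul]
    by_cases ha : a (m + 1) = 1
    · rw [hb_eq m ha, onesRunLength.succ_of_eq_one ha, fibRatio_succ, ha, Nat.cast_one, one_mul]
      exact ih.step_of_eq_one (fibRatio_pos _)
    · rw [hb_ne m ha, onesRunLength.succ_of_ne_one ha, fibRatio_zero]
      exact ih.step_of_ne_one (Nat.cast_nonneg _) (Nat.cast_nonneg _) (Nat.cast_nonneg _)

theorem continuant_prev_le (hp0 : p 0 = 0) (hq : ∀ n, q (n + 1) = a (n + 1) * q n + p n)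
    (hp : ∀ n, p (n + 1) = q n) (ha : ∀ k, 1 ≤ a (k + 1)) : ∀ n, p n ≤ q n
  | 0 => by simp [hp0]
  | n + 1 => by
    rw [hp, hq]
    exact Nat.le_add_right_of_le (Nat.le_mul_of_pos_left _ (ha n))

theorem continuant_succ_le (hp0 : p 0 = 0) (hq : ∀ n, q (n + 1) = a (n + 1) * q n + p n)
    (hp : ∀ n, p (n + 1) = q n) (ha : ∀ k, 1 ≤ a (k + 1)) (n : ℕ) :
    q (n + 1) ≤ (a (n + 1) + 1) * q n := by
  rw [hq, add_mul, one_mul]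
  exact Nat.add_le_add_left (continuant_prev_le hp0 hq hp ha n) _

end Continuant

theorem le_prod_Icc_of_le_mul {f c : ℕ → ℕ} (h0 : f 0 ≤ 1)
    (h : ∀ n, f (n + 1) ≤ c (n + 1) * f n) : ∀ n, f n ≤ ∏ k ∈ Icc 1 n, c k
  | 0 => by simpa using h0
  | n + 1 => by
    rw [prod_Icc_succ_top (Nat.le_add_left 1 n), mul_comm]
    exact (h n).trans (Nat.mul_le_mul_left _ (le_prod_Icc_of_le_mul h0 h n))

theorem qn_product_bounds_general (a q F : ℕ → ℕ) (b : ℕ → ℝ) (ha : ∀ k, 1 ≤ k → 1 ≤ a k)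
    (hq0 : q 0 = 1) (hq1 : q 1 = a 1)
    (hq : ∀ n, 1 ≤ n → q (n + 1) = a (n + 1) * q n + q (n - 1))
    (hF0 : F 0 = 1) (hF1 : F 1 = 1) (hF : ∀ j, F (j + 2) = F (j + 1) + F j)
    (hb1 : ∀ k, 1 ≤ k → a k ≠ 1 → b k = a k)
    (hb2 : ∀ k ℓ, 1 ≤ k → 1 ≤ ℓ → ℓ ≤ k → (∀ i, i < ℓ → a (k - i) = 1) →
      (k = ℓ ∨ a (k - ℓ) ≠ 1) → b k = (F ℓ : ℝ) / (F (ℓ - 1) : ℝ))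
    (n : ℕ) :
    (∏ k ∈ Finset.Icc 1 n, b k) ≤ (q n : ℝ) ∧
      (q n : ℝ) ≤ ∏ k ∈ Finset.Icc 1 n, ((a k : ℝ) + 1) := by
  set p : ℕ → ℕ := fun n => if n = 0 then 0 else q (n - 1)
  have hq' : ∀ n, q (n + 1) = a (n + 1) * q n + p n := by
    rintro (_ | n)
    · simp [p, hq0, hq1]
    · simpa [p] using hq (n + 1) (Nat.le_add_left 1 n)
  have hp : ∀ n, p (n + 1) = q n := fun n => by simp [p]
  have hb_eq : ∀ k, a (k + 1) = 1 → b (k + 1) = fibRatio (onesRunLength a k) := by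
    intro k hk
    have hrun := onesRunLength.succ_of_eq_one hk
    rw [hb2 (k + 1) _ (Nat.le_add_left 1 k) (by omega) (onesRunLength.le_self a _)
      (onesRunLength.eq_one_of_lt a _) (onesRunLength.eq_self_or_ne_one a _), hrun,
      eq_fib_add_one hF0 hF1 hF, eq_fib_add_one hF0 hF1 hF]
    rfl
  have ha' : ∀ k, 1 ≤ a (k + 1) := fun k => ha (k + 1) (Nat.le_add_left 1 k)
  have hb_ne : ∀ k, a (k + 1) ≠ 1 → b (k + 1) = a (k + 1) :=
    fun k => hb1 (k + 1) (Nat.le_add_left 1 k)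
  exact ⟨(lowerBoundInv_prod hq0 rfl hq' hp hb_ne hb_eq n).1,
    by exact_mod_cast le_prod_Icc_of_le_mul hq0.le (continuant_succ_le rfl hq' hp ha') n⟩

/-- Lemma 3.5: with the modified coefficients `b_k` (equal to `a_k` when `a_k ≠ 1`, and to
`F_ℓ/F_{ℓ-1}` at the end of a run of `ℓ` consecutive ones), the continued fraction
denominators satisfy `∏_{k=1}^n b_k ≤ q_n ≤ ∏_{k=1}^n (a_k + 1)`. -/
theorem qn_product_bounds (a q F : ℕ → ℕ) (b : ℕ → ℝ) (ha : ∀ k, 1 ≤ k → 1 ≤ a k)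
    (hq0 : q 0 = 1) (hq1 : q 1 = a 1)
    (hq : ∀ n, 1 ≤ n → q (n + 1) = a (n + 1) * q n + q (n - 1))
    (hF0 : F 0 = 1) (hF1 : F 1 = 1) (hF : ∀ j, F (j + 2) = F (j + 1) + F j)
    (hb1 : ∀ k, 1 ≤ k → a k ≠ 1 → b k = a k)
    (hb2 : ∀ k ℓ, 1 ≤ k → 1 ≤ ℓ → ℓ ≤ k → (∀ i, i < ℓ → a (k - i) = 1) →
      (k = ℓ ∨ a (k - ℓ) ≠ 1) → b k = (F ℓ : ℝ) / (F (ℓ - 1) : ℝ))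
    (n : ℕ) (hn : 1 ≤ n) :
    (∏ k ∈ Finset.Icc 1 n, b k) ≤ (q n : ℝ) ∧
      (q n : ℝ) ≤ ∏ k ∈ Finset.Icc 1 n, ((a k : ℝ) + 1) :=
  qn_product_bounds_general a q F b ha hq0 hq1 hq hF0 hF1 hF hb1 hb2 n
end

section
/- Let 0 < ε ≤ 1/2 and define the sequence of positive integers a_n = ⌊exp(n^{1/2+ε})⌋ for n ≥ 1. Then (i) log a_n ≤ n^{1/2+ε} for all n ≥ 1, and (ii) there exists a constant C > 0 such that (log a_{n+1})² ≤ C·∑_{k=1}^{n} log(a_k + 1) for all n ≥ 1. (Here log is the natural logarithm and ⌊·⌋ is the floor function.) Hence the number θ = [a_1, a_2, …] lies in 𝒜 ∩ PZ_ε. -/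
theorem log_floor_exp_le (x : ℝ) (hx : 0 ≤ x) :
    Real.log (⌊Real.exp x⌋₊ : ℝ) ≤ x := by
  have h1 : (1:ℝ) ≤ Real.exp x := Real.one_le_exp hx
  have hf : (1:ℕ) ≤ ⌊Real.exp x⌋₊ := Nat.le_floor (by exact_mod_cast h1)
  have hle : (⌊Real.exp x⌋₊ : ℝ) ≤ Real.exp x := Nat.floor_le (Real.exp_pos x).le
  calc Real.log (⌊Real.exp x⌋₊ : ℝ) ≤ Real.log (Real.exp x) := by
        apply Real.log_le_log (by exact_mod_cast hf) hle
    _ = x := Real.log_exp x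

theorem le_log_floor_exp_add_one (x : ℝ) :
    x ≤ Real.log ((⌊Real.exp x⌋₊ : ℝ) + 1) := by
  have h : Real.exp x ≤ (⌊Real.exp x⌋₊ : ℝ) + 1 := (Nat.lt_floor_add_one _).le
  rw [Real.le_log_iff_exp_le (by positivity)]
  exact h

theorem gauss_real (m : ℕ) : (∑ k ∈ Finset.Icc 1 m, (k:ℝ)) = m * (m + 1) / 2 := by
  induction m with
  | zero => simp
  | succ m ih =>
      rw [Finset.sum_Icc_succ_top (by omega)]
      push_cast [ih]; ring

/-- For `0 < ε ≤ 1/2` and `a_n = ⌊exp(n^{1/2+ε})⌋`: (i) `log a_n ≤ n^{1/2+ε}` for all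
`n ≥ 1`, and (ii) there is `C > 0` with `(log a_{n+1})² ≤ C·∑_{k=1}^n log(a_k + 1)` for all
`n ≥ 1`; hence `θ = [a_1, a_2, …]` lies in `𝒜 ∩ PZ_ε`. -/
theorem example_in_A_inter_PZeps (ε : ℝ) (hε0 : 0 < ε) (hε : ε ≤ 1 / 2) :
    (∀ n : ℕ, 1 ≤ n →
      Real.log (⌊Real.exp ((n : ℝ) ^ ((1 : ℝ) / 2 + ε))⌋₊ : ℝ) ≤ (n : ℝ) ^ ((1 : ℝ) / 2 + ε)) ∧
    ∃ C : ℝ, 0 < C ∧ ∀ n : ℕ, 1 ≤ n →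
      (Real.log (⌊Real.exp (((n : ℕ) + 1 : ℝ) ^ ((1 : ℝ) / 2 + ε))⌋₊ : ℝ)) ^ 2 ≤
        C * ∑ k ∈ Finset.Icc 1 n,
          Real.log ((⌊Real.exp ((k : ℝ) ^ ((1 : ℝ) / 2 + ε))⌋₊ : ℝ) + 1) := by
  set p : ℝ := (1:ℝ)/2 + ε with hpdef
  have hp0 : 0 < p := by positivity
  have hp1 : p ≤ 1 := by rw [hpdef]; linarith
  constructor
  · intro n hn
    exact log_floor_exp_le _ (Real.rpow_nonneg (Nat.cast_nonneg n) p)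
  · refine ⟨8, by norm_num, ?_⟩
    intro n hn
    have hn1 : (1:ℝ) ≤ (n:ℝ) := by exact_mod_cast hn
    have hnpos : (0:ℝ) < (n:ℝ) := by linarith
    -- lower bound for the sum
    have hsum1 : ∑ k ∈ Finset.Icc 1 n, (k:ℝ) ^ p ≤
        ∑ k ∈ Finset.Icc 1 n,
          Real.log ((⌊Real.exp ((k : ℝ) ^ p)⌋₊ : ℝ) + 1) :=
      Finset.sum_le_sum fun k _ => le_log_floor_exp_add_one _
    have hterm : ∀ k ∈ Finset.Icc 1 n, (k:ℝ) * (n:ℝ) ^ (p - 1) ≤ (k:ℝ) ^ p := by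
      intro k hk
      simp only [Finset.mem_Icc] at hk
      have hk1 : (1:ℝ) ≤ (k:ℝ) := by exact_mod_cast hk.1
      have hkn : (k:ℝ) ≤ (n:ℝ) := by exact_mod_cast hk.2
      have h1 : (n:ℝ) ^ (p - 1) ≤ (k:ℝ) ^ (p - 1) :=
        Real.rpow_le_rpow_of_nonpos (by linarith) hkn (by linarith)
      calc (k:ℝ) * (n:ℝ) ^ (p - 1) ≤ (k:ℝ) * (k:ℝ) ^ (p - 1) := by
            exact mul_le_mul_of_nonneg_left h1 (by linarith)
        _ = (k:ℝ) ^ (1:ℝ) * (k:ℝ) ^ (p - 1) := by rw [Real.rpow_one]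
        _ = (k:ℝ) ^ p := by
            rw [← Real.rpow_add (by linarith)]; ring_nf
    have hsum2 : (n:ℝ) ^ (p + 1) / 2 ≤ ∑ k ∈ Finset.Icc 1 n, (k:ℝ) ^ p := by
      have h2 : ∑ k ∈ Finset.Icc 1 n, (k:ℝ) * (n:ℝ) ^ (p - 1) ≤
          ∑ k ∈ Finset.Icc 1 n, (k:ℝ) ^ p := Finset.sum_le_sum hterm
      have h3 : ∑ k ∈ Finset.Icc 1 n, (k:ℝ) * (n:ℝ) ^ (p - 1)
          = ((n:ℝ) * ((n:ℝ) + 1) / 2) * (n:ℝ) ^ (p - 1) := by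
        rw [← Finset.sum_mul, gauss_real]
      have h4 : (n:ℝ) ^ (p + 1) = (n:ℝ) ^ 2 * (n:ℝ) ^ (p - 1) := by
        rw [← Real.rpow_natCast (n:ℝ) 2, ← Real.rpow_add hnpos]
        congr 1
        push_cast
        ring
      have h5 : (0:ℝ) < (n:ℝ) ^ (p - 1) := Real.rpow_pos_of_pos hnpos _
      rw [h4]
      nlinarith [h2, h3, h5, sq_nonneg ((n:ℝ) - 1)]
    -- upper bound for the log
    have hL0 : 0 ≤ Real.log (⌊Real.exp (((n : ℕ) + 1 : ℝ) ^ p)⌋₊ : ℝ) := by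
      apply Real.log_nonneg
      have hx1 : (1:ℝ) ≤ Real.exp (((n : ℕ) + 1 : ℝ) ^ p) :=
        Real.one_le_exp (Real.rpow_nonneg (by positivity) p)
      have hx2 : (1:ℕ) ≤ ⌊Real.exp (((n : ℕ) + 1 : ℝ) ^ p)⌋₊ :=
        Nat.le_floor (by exact_mod_cast hx1)
      exact_mod_cast hx2
    have hL : Real.log (⌊Real.exp (((n : ℕ) + 1 : ℝ) ^ p)⌋₊ : ℝ) ≤ ((n:ℝ) + 1) ^ p :=
      log_floor_exp_le _ (Real.rpow_nonneg (by positivity) p)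
    have hsq : (Real.log (⌊Real.exp (((n : ℕ) + 1 : ℝ) ^ p)⌋₊ : ℝ)) ^ 2 ≤
        (((n:ℝ) + 1) ^ p) ^ 2 := pow_le_pow_left₀ hL0 hL 2
    have hpow : (((n:ℝ) + 1) ^ p) ^ 2 ≤ 4 * (n:ℝ) ^ (p + 1) := by
      have e1 : (((n:ℝ) + 1) ^ p) ^ 2 = ((n:ℝ) + 1) ^ (p * 2) := by
        rw [← Real.rpow_natCast (((n:ℝ) + 1) ^ p) 2,
          ← Real.rpow_mul (by positivity)]
        norm_num
      have e2 : ((n:ℝ) + 1) ^ (p * 2) ≤ (2 * (n:ℝ)) ^ (p * 2) :=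
        Real.rpow_le_rpow (by positivity) (by linarith) (by positivity)
      have e3 : (2 * (n:ℝ)) ^ (p * 2) = (2:ℝ) ^ (p * 2) * (n:ℝ) ^ (p * 2) :=
        Real.mul_rpow (by norm_num) (by positivity)
      have e4 : (2:ℝ) ^ (p * 2) ≤ 4 := by
        have : (2:ℝ) ^ (p * 2) ≤ (2:ℝ) ^ (2:ℝ) :=
          Real.rpow_le_rpow_of_exponent_le (by norm_num) (by linarith)
        have h42 : (2:ℝ) ^ (2:ℝ) = 4 := by
          rw [show (2:ℝ) = ((2:ℕ):ℝ) from by norm_num, Real.rpow_natCast]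
          norm_num
        linarith [h42 ▸ this]
      have e5 : (n:ℝ) ^ (p * 2) ≤ (n:ℝ) ^ (p + 1) :=
        Real.rpow_le_rpow_of_exponent_le hn1 (by linarith)
      have h6 : (0:ℝ) ≤ (n:ℝ) ^ (p * 2) := Real.rpow_nonneg (by positivity) _
      have h7 : (0:ℝ) ≤ (2:ℝ) ^ (p * 2) := Real.rpow_nonneg (by norm_num) _
      calc (((n:ℝ) + 1) ^ p) ^ 2 = ((n:ℝ) + 1) ^ (p * 2) := e1
        _ ≤ (2 * (n:ℝ)) ^ (p * 2) := e2
        _ = (2:ℝ) ^ (p * 2) * (n:ℝ) ^ (p * 2) := e3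
        _ ≤ 4 * (n:ℝ) ^ (p + 1) := by nlinarith
    linarith [hsq, hpow, hsum1, hsum2]
end

section
/- Let 0 < ε ≤ 1/2 and define the sequence of positive integers a_n = ⌊exp(n^{1/2+ε})⌋ if n is a perfect square and a_n = 1 otherwise. Then (i) log a_n ≤ n^{1/2+ε} for all n ≥ 1, but (ii) for every constant C > 0 there exist infinitely many n ≥ 1 with (log a_{n+1})² > C·∑_{k=1}^{n} log(a_k + 1). (Here log is the natural logarithm and ⌊·⌋ is the floor function.) Hence θ = [a_1, a_2, …] lies in PZ_ε but not in 𝒜. -/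
/-!
Put `x = (m²)^(1/2+ε) = m^(1+2ε)`. The term `a_{m²} ≈ e^x` contributes `(log a_{m²})² ≈ x²`,
while the `m² - 1` preceding terms contribute at most `1` each plus `x` for each of the fewer than
`m` squares among them, in total `O(m x)`. The ratio is of order `x / m = m^(2ε)`, which is
unbounded since `ε > 0`.
-/

open Real Finset Filter

noncomputable def squareSpikes (p : ℝ) (n : ℕ) : ℕ :=
  if IsSquare n then ⌊exp ((n : ℝ) ^ p)⌋₊ else 1

lemma log_natFloor_exp_le {y : ℝ} (hy : 0 ≤ y) : log ⌊exp y⌋₊ ≤ y := by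
  have hpos : (0 : ℝ) < ⌊exp y⌋₊ := by
    exact_mod_cast Nat.floor_pos.mpr (one_le_exp hy)
  calc log ⌊exp y⌋₊ ≤ log (exp y) := log_le_log hpos (Nat.floor_le (exp_pos y).le)
    _ = y := log_exp y

lemma log_natFloor_exp_add_one_le {y : ℝ} (hy : 0 ≤ y) : log (⌊exp y⌋₊ + 1) ≤ y + 1 := by
  rw [log_le_iff_le_exp (by positivity), exp_add]
  have h2 : (2 : ℝ) ≤ exp 1 := by linarith [add_one_le_exp (1 : ℝ)]
  calc (⌊exp y⌋₊ : ℝ) + 1 ≤ exp y * 2 := by linarith [Nat.floor_le (exp_pos y).le, one_le_exp hy]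
    _ ≤ exp y * exp 1 := by gcongr

lemma sub_one_le_log_natFloor_exp {x : ℝ} (hx : 1 ≤ x) : x - 1 ≤ log ⌊exp x⌋₊ := by
  have h2 : 2 ≤ exp x := by linarith [add_one_le_exp x]
  have hhalf : exp x / 2 ≤ ⌊exp x⌋₊ := by linarith [Nat.sub_one_lt_floor (exp x)]
  calc x - 1 ≤ x - log 2 := by linarith [log_two_lt_d9]
    _ = log (exp x / 2) := by rw [log_div (exp_pos x).ne' two_ne_zero, log_exp]
    _ ≤ log ⌊exp x⌋₊ := log_le_log (by positivity) hhalf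

lemma card_filter_isSquare_Icc_le (n : ℕ) : #{k ∈ Icc 1 n | IsSquare k} ≤ Nat.sqrt n := by
  calc #{k ∈ Icc 1 n | IsSquare k} ≤ #((Icc 1 (Nat.sqrt n)).image fun j => j * j) := by
        refine card_le_card fun k hk => ?_
        obtain ⟨hk, j, rfl⟩ := mem_filter.mp hk
        rw [mem_Icc] at hk
        refine mem_image.mpr ⟨j, mem_Icc.mpr ⟨?_, Nat.le_sqrt.mpr hk.2⟩, rfl⟩
        exact Nat.pos_of_ne_zero fun hj => by simp [hj] at hk
    _ ≤ Nat.sqrt n := card_image_le.trans (by simp)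

section squareSpikes

variable {p : ℝ}

lemma log_squareSpikes_le (n : ℕ) : log (squareSpikes p n) ≤ (n : ℝ) ^ p := by
  have hnp : 0 ≤ (n : ℝ) ^ p := rpow_nonneg n.cast_nonneg p
  unfold squareSpikes
  split_ifs
  · exact log_natFloor_exp_le hnp
  · simpa using hnp

lemma log_squareSpikes_add_one_le (hp : 0 ≤ p) {k n : ℕ} (hkn : k ≤ n) :
    log (squareSpikes p k + 1) ≤ 1 + if IsSquare k then (n : ℝ) ^ p else 0 := by
  unfold squareSpikes
  split_ifs
  · have hkp : (k : ℝ) ^ p ≤ (n : ℝ) ^ p := by gcongr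
    linarith [log_natFloor_exp_add_one_le (rpow_nonneg k.cast_nonneg p)]
  · rw [log_le_iff_le_exp (by norm_num)]
    norm_num
    linarith [add_one_le_exp (1 : ℝ)]

lemma sum_log_squareSpikes_add_one_le (hp : 0 ≤ p) (n : ℕ) :
    ∑ k ∈ Icc 1 n, log (squareSpikes p k + 1) ≤ n + Nat.sqrt n * (n : ℝ) ^ p := by
  have hcard : (#{k ∈ Icc 1 n | IsSquare k} : ℝ) ≤ Nat.sqrt n := by
    exact_mod_cast card_filter_isSquare_Icc_le n
  calc ∑ k ∈ Icc 1 n, log (squareSpikes p k + 1)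
      ≤ ∑ k ∈ Icc 1 n, (1 + if IsSquare k then (n : ℝ) ^ p else 0) :=
        sum_le_sum fun k hk => log_squareSpikes_add_one_le hp (mem_Icc.mp hk).2
    _ = n + #{k ∈ Icc 1 n | IsSquare k} * (n : ℝ) ^ p := by
        rw [sum_add_distrib, ← sum_filter]
        simp
    _ ≤ n + Nat.sqrt n * (n : ℝ) ^ p := by gcongr

lemma sum_log_squareSpikes_add_one_le_sq (hp : 0 ≤ p) (m : ℕ) :
    ∑ k ∈ Icc 1 (m ^ 2 - 1), log (squareSpikes p k + 1) ≤ m ^ 2 + m * ((m ^ 2 : ℕ) : ℝ) ^ p := by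
  have hn : m ^ 2 - 1 ≤ m ^ 2 := Nat.sub_le _ 1
  have hsqrt : Nat.sqrt (m ^ 2 - 1) ≤ m := (Nat.sqrt_le_sqrt hn).trans (Nat.sqrt_eq' m).le
  refine (sum_log_squareSpikes_add_one_le hp _).trans ?_
  gcongr
  exact_mod_cast hn

lemma sub_one_le_log_squareSpikes_sq (hp : 0 ≤ p) {m : ℕ} (hm : 1 ≤ m) :
    ((m ^ 2 : ℕ) : ℝ) ^ p - 1 ≤ log (squareSpikes p (m ^ 2)) := by
  rw [squareSpikes, if_pos ⟨m, sq m⟩]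
  exact sub_one_le_log_natFloor_exp (one_le_rpow (by exact_mod_cast Nat.one_le_pow _ _ hm) hp)

end squareSpikes

lemma natCast_sq_rpow_half_add (m : ℕ) {ε : ℝ} (hε : 0 ≤ ε) :
    ((m ^ 2 : ℕ) : ℝ) ^ ((1 : ℝ) / 2 + ε) = m * (m : ℝ) ^ (2 * ε) := by
  have hexp : (1 : ℝ) + 2 * ε ≠ 0 := by positivity
  rw [Nat.cast_pow, ← rpow_natCast_mul m.cast_nonneg, ← rpow_one_add' m.cast_nonneg hexp]
  ring_nf

lemma exists_ge_lt_natCast_rpow {δ : ℝ} (hδ : 0 < δ) (B : ℝ) (N : ℕ) :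
    ∃ m : ℕ, N ≤ m ∧ B < (m : ℝ) ^ δ :=
  (((tendsto_rpow_atTop hδ).comp tendsto_natCast_atTop_atTop).eventually_gt_atTop B
    |>.and (eventually_ge_atTop N)).exists.imp fun _ h => h.symm

theorem example_in_PZeps_not_in_A_general (ε : ℝ) (hε0 : 0 < ε) (a : ℕ → ℕ)
    (hadef : ∀ n : ℕ, a n =
      if IsSquare n then ⌊Real.exp ((n : ℝ) ^ ((1 : ℝ) / 2 + ε))⌋₊ else 1) :
    (∀ n : ℕ, 1 ≤ n → Real.log (a n) ≤ (n : ℝ) ^ ((1 : ℝ) / 2 + ε)) ∧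
    ∀ C : ℝ, 0 < C → ∀ N : ℕ, ∃ n : ℕ, N ≤ n ∧ 1 ≤ n ∧
      (Real.log (a (n + 1))) ^ 2 > C * ∑ k ∈ Finset.Icc 1 n, Real.log ((a k : ℝ) + 1) := by
  obtain rfl : a = squareSpikes (1 / 2 + ε) := funext hadef
  refine ⟨fun n _ => log_squareSpikes_le n, fun C hC N => ?_⟩
  have hp : (0 : ℝ) ≤ 1 / 2 + ε := by linarith
  obtain ⟨m, hmN, hmC⟩ := exists_ge_lt_natCast_rpow (by linarith : 0 < 2 * ε) (8 * C) (N + 2)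
  have hmm : m ≤ m ^ 2 := Nat.le_self_pow two_ne_zero m
  refine ⟨m ^ 2 - 1, by omega, by omega, ?_⟩
  rw [Nat.sub_add_cancel (by omega)]
  have hlog := sub_one_le_log_squareSpikes_sq hp (by omega : 1 ≤ m)
  have hsum := sum_log_squareSpikes_add_one_le_sq hp m
  rw [natCast_sq_rpow_half_add m hε0.le] at hlog hsum
  set y := (m : ℝ) ^ (2 * ε)
  have hm2 : (2 : ℝ) ≤ m := by exact_mod_cast (by omega : 2 ≤ m)
  have hy : 1 ≤ y := one_le_rpow (by linarith) (by linarith)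
  have hL : m * y / 2 ≤ log (squareSpikes (1 / 2 + ε) (m ^ 2)) := by nlinarith
  calc C * ∑ k ∈ Icc 1 (m ^ 2 - 1), log (squareSpikes (1 / 2 + ε) k + 1)
      ≤ C * (2 * (m ^ 2 * y)) := by gcongr; nlinarith
    _ < (m * y / 2) ^ 2 := by
        nlinarith [mul_pos (by positivity : (0 : ℝ) < m ^ 2 * y) (sub_pos.mpr hmC)]
    _ ≤ log (squareSpikes (1 / 2 + ε) (m ^ 2)) ^ 2 := by gcongr

/-- For `0 < ε ≤ 1/2`, the sequence `a_n = ⌊exp(n^{1/2+ε})⌋` for `n` a perfect square and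
`a_n = 1` otherwise satisfies: (i) `log a_n ≤ n^{1/2+ε}` for all `n ≥ 1`, but (ii) for every
`C > 0` there are infinitely many `n ≥ 1` with `(log a_{n+1})² > C·∑_{k=1}^n log(a_k + 1)`;
hence `θ = [a_1, a_2, …]` lies in `PZ_ε` but not in `𝒜`. -/
theorem example_in_PZeps_not_in_A (ε : ℝ) (hε0 : 0 < ε) (hε : ε ≤ 1 / 2) (a : ℕ → ℕ)
    (hadef : ∀ n : ℕ, a n =
      if IsSquare n then ⌊Real.exp ((n : ℝ) ^ ((1 : ℝ) / 2 + ε))⌋₊ else 1) :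
    (∀ n : ℕ, 1 ≤ n → Real.log (a n) ≤ (n : ℝ) ^ ((1 : ℝ) / 2 + ε)) ∧
    ∀ C : ℝ, 0 < C → ∀ N : ℕ, ∃ n : ℕ, N ≤ n ∧ 1 ≤ n ∧
      (Real.log (a (n + 1))) ^ 2 > C * ∑ k ∈ Finset.Icc 1 n, Real.log ((a k : ℝ) + 1) :=
  example_in_PZeps_not_in_A_general ε hε0 a hadef
end

section
/- For every real C ≥ 1 there exists a real C′ ≥ 1, depending only on C, with the following property. Let k ≥ C′ be an integer and let t_0 < t_1 < … < t_k be real numbers such that for all 1 ≤ j ≤ k, (t_k − t_0)/(C·min(j, k+1−j)²) ≤ t_j − t_{j−1} ≤ C·(t_k − t_0)/min(j, k+1−j)². Let h : ℝ → ℝ be a monotone nondecreasing function with h(t_j) = j for all 0 ≤ j ≤ k. Then there exist a real number t and δ > 0 with t − δ ≥ t_0 and t + δ ≤ t_k such that h(t + δ) − h(t) ≥ (k/C′)·(h(t) − h(t − δ)) and h(t + δ) − h(t) ≥ k/C′. In particular the quasisymmetric distortion sup over x, δ of (h(x+δ) − h(x))/(h(x) − h(x−δ)) is at least k/C′ whenever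 the denominator is positive at the witness. -/
/-!
Put `L = t_k - t_0`, `m = ⌈C²⌉` and look at the window of radius `δ = L / C` around `x = t_m`.
The first and last gaps are at least `δ`, so the window lies in `[t_0, t_k]` and its left half
meets at most the `m` points `t_1, …, t_m`. In the parabolic part `m ≤ j ≤ k/2` the gaps are
at most `C L / j²`, which telescope to `t_j - t_m ≤ C L / m ≤ L / C`; hence the right half
reaches `t_{⌈k/2⌉}` and `h` increases by at least `k/2 - m ≥ k/4` there. So `C' = 4m` works.
-/

def IsAlmostParabolic (C : ℝ) (k : ℕ) (t : ℕ → ℝ) : Prop :=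
  ∀ j : ℕ, 1 ≤ j → j ≤ k →
    (t k - t 0) / (C * ((min j (k + 1 - j) : ℕ) : ℝ) ^ 2) ≤ t j - t (j - 1) ∧
    t j - t (j - 1) ≤ C * (t k - t 0) / ((min j (k + 1 - j) : ℕ) : ℝ) ^ 2

theorem sub_le_div_sub_div_of_forall_succ_sub_le {t : ℕ → ℝ} {A : ℝ} (hA : 0 ≤ A)
    {m n : ℕ} (hm : 1 ≤ m) (hmn : m ≤ n)
    (hstep : ∀ j, m ≤ j → j < n → t (j + 1) - t j ≤ A / ((j : ℝ) + 1) ^ 2) :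
    t n - t m ≤ A / m - A / n := by
  induction n, hmn using Nat.le_induction with
  | base => simp
  | succ n hmn ih =>
    have hn : (0 : ℝ) < n := by exact_mod_cast (by omega : 0 < n)
    have htelescope : A / n - A / ((n : ℝ) + 1) = A / (n * ((n : ℝ) + 1)) := by
      field_simp
      ring
    have hsq : A / ((n : ℝ) + 1) ^ 2 ≤ A / (n * ((n : ℝ) + 1)) :=
      div_le_div_of_nonneg_left hA (by positivity) (by nlinarith)
    push_cast
    linarith [ih fun j hj hjn => hstep j hj (by omega), hstep n hmn (by omega)]

namespace IsAlmostParabolic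

variable {C : ℝ} {k : ℕ} {t : ℕ → ℝ}

theorem div_le_first_gap (ht : IsAlmostParabolic C k t) (hk : 1 ≤ k) :
    (t k - t 0) / C ≤ t 1 - t 0 := by
  have h := (ht 1 le_rfl hk).1
  rw [show min 1 (k + 1 - 1) = 1 by omega] at h
  simpa using h

theorem div_le_last_gap (ht : IsAlmostParabolic C k t) (hk : 1 ≤ k) :
    (t k - t 0) / C ≤ t k - t (k - 1) := by
  have h := (ht k hk le_rfl).1
  rw [show min k (k + 1 - k) = 1 by omega] at h
  simpa using h

theorem sub_le_div_of_le_half (ht : IsAlmostParabolic C k t) (hC : 0 ≤ C) (hL : t 0 ≤ t k)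
    {m n : ℕ} (hm : 1 ≤ m) (hmn : m ≤ n) (hn : 2 * n ≤ k + 1) :
    t n - t m ≤ C * (t k - t 0) / m := by
  have hA : 0 ≤ C * (t k - t 0) := mul_nonneg hC (sub_nonneg.mpr hL)
  have hgaps := sub_le_div_sub_div_of_forall_succ_sub_le hA hm hmn fun j _ hjn => by
    have h := (ht (j + 1) (by omega) (by omega)).2
    rw [show min (j + 1) (k + 1 - (j + 1)) = j + 1 by omega] at h
    simpa using h
  linarith [div_nonneg hA (Nat.cast_nonneg n)]

end IsAlmostParabolic

/-- Abstract core of Proposition 3.11: if points `t_0 < t_1 < … < t_k` satisfy the Yoccoz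
almost-parabolic distribution `t_j - t_{j-1} ≍_C (t_k - t_0)/min(j, k+1-j)²` and a monotone
map `h` sends `t_j` to `j`, then there are `x` and `δ > 0` with `[x - δ, x + δ] ⊆ [t_0, t_k]`
such that `h(x+δ) - h(x) ≥ (k/C')·(h(x) - h(x-δ))` and `h(x+δ) - h(x) ≥ k/C'`, for a constant
`C'` depending only on `C`. -/
theorem quasisymmetric_distortion_lower_bound (C : ℝ) (hC : 1 ≤ C) :
    ∃ C' : ℝ, 1 ≤ C' ∧ ∀ k : ℕ, C' ≤ (k : ℝ) → ∀ t : ℕ → ℝ,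
      (∀ i j : ℕ, i < j → j ≤ k → t i < t j) →
      (∀ j : ℕ, 1 ≤ j → j ≤ k →
        (t k - t 0) / (C * ((min j (k + 1 - j) : ℕ) : ℝ) ^ 2) ≤ t j - t (j - 1) ∧
        t j - t (j - 1) ≤ C * (t k - t 0) / ((min j (k + 1 - j) : ℕ) : ℝ) ^ 2) →
      ∀ h : ℝ → ℝ, Monotone h → (∀ j : ℕ, j ≤ k → h (t j) = j) →
      ∃ x δ : ℝ, 0 < δ ∧ t 0 ≤ x - δ ∧ x + δ ≤ t k ∧
        (k : ℝ) / C' * (h x - h (x - δ)) ≤ h (x + δ) - h x ∧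
        (k : ℝ) / C' ≤ h (x + δ) - h x := by
  set m := ⌈C ^ 2⌉₊
  have hCm : C ^ 2 ≤ m := Nat.le_ceil _
  have hm : (1 : ℝ) ≤ m := by nlinarith
  refine ⟨4 * m, by linarith, fun k hk t ht hgap h hh hht => ?_⟩
  replace hgap : IsAlmostParabolic C k t := hgap
  have hm1 : 1 ≤ m := by exact_mod_cast hm
  have hmk : 4 * m ≤ k := by exact_mod_cast hk
  have htk : ∀ i j, i ≤ j → j ≤ k → t i ≤ t j := fun i j hij hjk =>
    hij.eq_or_lt.elim (fun hij => hij ▸ le_rfl) fun hij => (ht i j hij hjk).le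
  have hL : t 0 < t k := ht 0 k (by omega) le_rfl
  have hδ : 0 < (t k - t 0) / C := div_pos (by linarith) (by linarith)
  have hmid : t ((k + 1) / 2) - t m ≤ (t k - t 0) / C := by
    refine (hgap.sub_le_div_of_le_half (by linarith) hL.le hm1 (by omega) (by omega)).trans ?_
    rw [div_le_div_iff₀ (by linarith) (by linarith)]
    nlinarith
  have hleft : t 0 ≤ t m - (t k - t 0) / C := by
    linarith [hgap.div_le_first_gap (by omega), htk 1 m hm1 (by omega)]
  have hright : t m + (t k - t 0) / C ≤ t k := by
    linarith [hgap.div_le_last_gap (by omega), htk m (k - 1) (by omega) (by omega)]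
  have hh_left : h (t m) - h (t m - (t k - t 0) / C) ≤ m := by
    linarith [hh hleft, hht 0 (by omega), hht m (by omega)]
  have hh_right : (k : ℝ) / 4 ≤ h (t m + (t k - t 0) / C) - h (t m) := by
    have hhalf : (k : ℝ) ≤ 2 * ((k + 1) / 2 : ℕ) := by
      exact_mod_cast (by omega : k ≤ 2 * ((k + 1) / 2))
    linarith [hh (by linarith : t ((k + 1) / 2) ≤ t m + (t k - t 0) / C),
      hht ((k + 1) / 2) (by omega), hht m (by omega)]
  refine ⟨t m, (t k - t 0) / C, hδ, hleft, hright, ?_, ?_⟩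
  · calc (k : ℝ) / (4 * m) * (h (t m) - h (t m - (t k - t 0) / C))
        ≤ k / (4 * m) * m := mul_le_mul_of_nonneg_left hh_left (by positivity)
      _ = k / 4 := by field_simp
      _ ≤ _ := hh_right
  · calc (k : ℝ) / (4 * m) ≤ k / 4 :=
          div_le_div_of_nonneg_left (by positivity) (by norm_num) (by linarith)
      _ ≤ _ := hh_right
end

section
/- For every real C ≥ 1 there exists a real C′ ≥ 1, depending only on C, with the following property. Let k ≥ 4 be an integer, set a = ⌊k/2⌋ (so a ≥ 2), and let −1 = s_0 < s_1 < … < s_k = 1 be real numbers with 2/(Ck) ≤ s_j − s_{j−1} ≤ 2C/k for all 1 ≤ j ≤ k. Define ψ(x) = s_a − (1 + s_a)·ζ_a((s_a − x)/(1 + s_a)) for x ∈ [−1, s_a], where ζ_a(u) = u/(a − (a−1)u). Then for all 1 ≤ j ≤ a, 1/(C′·j²) ≤ ψ(s_j) − ψ(s_{j−1}) ≤ C′/j². -/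
set_option maxHeartbeats 1000000

private lemma mbpd_pos_left {x y : ℝ} (hy : 0 < y) (hxy : 0 < x * y) : 0 < x := by
  nlinarith

private lemma mbpd_P_lower {C ar jr kr B A : ℝ} (har0 : 0 < ar) (hjra : jr ≤ ar)
    (hB1 : 2 * jr ≤ B * (C * kr)) (hA1 : 2 * (ar - jr) ≤ A * (C * kr)) :
    2 * ar * jr ≤ (ar * B + A) * (C * kr) := by
  linarith [mul_le_mul_of_nonneg_left hB1 har0.le]

private lemma mbpd_Q_lower {C ar jr kr B' A' : ℝ} (har2 : 2 ≤ ar) (hjr1 : 1 ≤ jr)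
    (hB'1 : 2 * (jr - 1) ≤ B' * (C * kr)) (hA'1 : 2 * (ar - jr + 1) ≤ A' * (C * kr)) :
    ar * jr ≤ (ar * B' + A') * (C * kr) := by
  have har0 : (0:ℝ) ≤ ar := by linarith
  linarith [mul_le_mul_of_nonneg_left hB'1 har0,
    mul_le_mul_of_nonneg_right har2 (by linarith : (0:ℝ) ≤ jr)]

private lemma mbpd_T_lb {C T ar kr : ℝ} (hC0 : 0 < C) (hTpos : 0 < T) (har2 : 2 ≤ ar)
    (hkle : kr ≤ 2 * ar + 1) (hT1 : 2 * ar ≤ T * (C * kr)) : 4 ≤ 5 * C * T := by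
  have hxnn : (0:ℝ) ≤ C * T := by positivity
  nlinarith [mul_le_mul_of_nonneg_left hkle hxnn]

private lemma mbpd_T_ub {C T ar kr : ℝ} (hC0 : 0 < C) (hk0 : 0 < kr)
    (hkge : 2 * ar ≤ kr) (hT2 : T * kr ≤ 2 * C * ar) : T ≤ C := by
  nlinarith [mul_le_mul_of_nonneg_left hkge hC0.le]

private lemma mbpd_key (C ar jr kr g T B B' A A' : ℝ)
    (hC : 1 ≤ C) (har2 : 2 ≤ ar) (hjr1 : 1 ≤ jr) (hjra : jr ≤ ar)
    (hkle : kr ≤ 2 * ar + 1) (hkge : 2 * ar ≤ kr) (hk0 : 0 < kr)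
    (hg1 : 2 ≤ g * (C * kr)) (hg2 : g * kr ≤ 2 * C)
    (hT1 : 2 * ar ≤ T * (C * kr)) (hT2 : T * kr ≤ 2 * C * ar)
    (hB1 : 2 * jr ≤ B * (C * kr)) (hB2 : B * kr ≤ 2 * C * jr)
    (hB'1 : 2 * (jr - 1) ≤ B' * (C * kr)) (hB'2 : B' * kr ≤ 2 * C * (jr - 1))
    (hA1 : 2 * (ar - jr) ≤ A * (C * kr)) (hA2 : A * kr ≤ 2 * C * (ar - jr))
    (hA'1 : 2 * (ar - jr + 1) ≤ A' * (C * kr)) (hA'2 : A' * kr ≤ 2 * C * (ar - jr + 1)) :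
    1 / (8 * C ^ 5 * jr ^ 2) ≤ ar * g * T ^ 2 / ((ar * B + A) * (ar * B' + A')) ∧
      ar * g * T ^ 2 / ((ar * B + A) * (ar * B' + A')) ≤ 8 * C ^ 5 / jr ^ 2 := by
  have hC0 : (0:ℝ) < C := lt_of_lt_of_le one_pos hC
  have hCk : (0:ℝ) < C * kr := by positivity
  have har0 : (0:ℝ) < ar := by linarith
  have hj0 : (0:ℝ) < jr := by linarith
  have hPl : 2 * ar * jr ≤ (ar * B + A) * (C * kr) := mbpd_P_lower har0 hjra hB1 hA1
  have hQl : ar * jr ≤ (ar * B' + A') * (C * kr) := mbpd_Q_lower har2 hjr1 hB'1 hA'1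
  have hPu : (ar * B + A) * kr ≤ 4 * C * ar * jr := by
    linarith [mul_le_mul_of_nonneg_left hB2 har0.le, hA2,
      mul_le_mul_of_nonneg_left hjr1 (by positivity : (0:ℝ) ≤ 2 * C * ar),
      mul_nonneg hC0.le hj0.le]
  have hQu : (ar * B' + A') * kr ≤ 2 * C * ar * jr := by
    linarith [mul_le_mul_of_nonneg_left hB'2 har0.le, hA'2,
      mul_le_mul_of_nonneg_left hjr1 (by positivity : (0:ℝ) ≤ 2 * C)]
  have hPpos : 0 < ar * B + A := mbpd_pos_left hCk (lt_of_lt_of_le (by positivity) hPl)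
  have hQpos : 0 < ar * B' + A' := mbpd_pos_left hCk (lt_of_lt_of_le (by positivity) hQl)
  have hTpos : 0 < T := mbpd_pos_left hCk (lt_of_lt_of_le (by positivity) hT1)
  have hgpos : 0 < g := mbpd_pos_left hCk (by linarith)
  have hDnpos : 0 < (ar * B + A) * (ar * B' + A') := mul_pos hPpos hQpos
  have hNnn : (0:ℝ) ≤ ar * g * T ^ 2 := by positivity
  have hT_lb : 4 ≤ 5 * C * T := mbpd_T_lb hC0 hTpos har2 hkle hT1
  have hT_ub : T ≤ C := mbpd_T_ub hC0 hk0 hkge hT2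
  -- N bounds
  have h16 : 16 ≤ (5 * C * T) ^ 2 := by
    linarith [sq_nonneg (5 * C * T - 4), hT_lb]
  have hNl : 32 * ar ≤ 25 * (ar * g * T ^ 2) * (C ^ 3 * kr) := by
    have h32 : 32 ≤ (g * (C * kr)) * ((5 * C * T) ^ 2) := by
      linarith [mul_nonneg (by linarith : (0:ℝ) ≤ g * (C * kr) - 2)
        (by linarith : (0:ℝ) ≤ (5 * C * T) ^ 2 - 16)]
    linarith [mul_le_mul_of_nonneg_left h32 har0.le]
  have hNu : (ar * g * T ^ 2) * kr ≤ 2 * C ^ 3 * ar := by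
    have hT2c : T ^ 2 ≤ C ^ 2 := by
      linarith [mul_le_mul hT_ub hT_ub hTpos.le hC0.le, sq_nonneg T, sq_nonneg C,
        sq_abs T, mul_self_le_mul_self hTpos.le hT_ub]
    have h1 : (g * kr) * T ^ 2 ≤ (2 * C) * C ^ 2 :=
      mul_le_mul hg2 hT2c (sq_nonneg T) (by positivity)
    linarith [mul_le_mul_of_nonneg_left h1 har0.le]
  -- D bounds
  have hDu : (((ar * B + A) * (ar * B' + A'))) * kr ^ 2 ≤ 8 * C ^ 2 * ar ^ 2 * jr ^ 2 := by
    linarith [mul_le_mul hPu hQu (mul_nonneg hQpos.le hk0.le)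
      (by positivity : (0:ℝ) ≤ 4 * C * ar * jr)]
  have hDl : 2 * ar ^ 2 * jr ^ 2 ≤ (((ar * B + A) * (ar * B' + A'))) * (C * kr) ^ 2 := by
    linarith [mul_le_mul hPl hQl (by positivity : (0:ℝ) ≤ ar * jr)
      (mul_nonneg hPpos.le hCk.le)]
  constructor
  · have hX : (0:ℝ) < kr ^ 2 * C ^ 3 := by positivity
    have l1 : (((ar * B + A) * (ar * B' + A'))) * (kr ^ 2 * C ^ 3) ≤ 8 * C ^ 5 * ar ^ 2 * jr ^ 2 := by
      linarith [mul_le_mul_of_nonneg_right hDu (by positivity : (0:ℝ) ≤ C ^ 3)]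
    have l2a : 64 * ar ^ 2 ≤ 25 * (ar * g * T ^ 2) * C ^ 3 * kr ^ 2 := by
      linarith [mul_le_mul_of_nonneg_right hNl hk0.le,
        mul_le_mul_of_nonneg_left hkge (by positivity : (0:ℝ) ≤ 32 * ar)]
    have l2 : 8 * C ^ 5 * ar ^ 2 * jr ^ 2 ≤
        (ar * g * T ^ 2 * (8 * C ^ 5 * jr ^ 2)) * (kr ^ 2 * C ^ 3) := by
      linarith [mul_le_mul_of_nonneg_left l2a (by positivity : (0:ℝ) ≤ C ^ 5 * jr ^ 2),
        mul_nonneg (mul_nonneg (by positivity : (0:ℝ) ≤ C ^ 8 * jr ^ 2) hNnn) (sq_nonneg kr)]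
    have lkey := le_of_mul_le_mul_right (le_trans l1 l2) hX
    rw [div_le_div_iff₀ (by positivity) hDnpos]
    linarith [lkey]
  · have hY : (0:ℝ) < C ^ 2 * kr ^ 2 := by positivity
    have hk3 : kr ≤ 3 * ar := by linarith
    have u1 : ((ar * g * T ^ 2) * jr ^ 2) * (C ^ 2 * kr ^ 2) ≤
        2 * C ^ 5 * ar * kr * jr ^ 2 := by
      linarith [mul_le_mul_of_nonneg_right hNu
        (by positivity : (0:ℝ) ≤ C ^ 2 * kr * jr ^ 2)]
    have u2 : 2 * C ^ 5 * ar * kr * jr ^ 2 ≤ 6 * C ^ 5 * ar ^ 2 * jr ^ 2 := by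
      linarith [mul_le_mul_of_nonneg_left hk3
        (by positivity : (0:ℝ) ≤ 2 * C ^ 5 * ar * jr ^ 2)]
    have u3 : 6 * C ^ 5 * ar ^ 2 * jr ^ 2 ≤ (8 * C ^ 5 * (((ar * B + A) * (ar * B' + A')))) * (C ^ 2 * kr ^ 2) := by
      linarith [mul_le_mul_of_nonneg_left hDl (by positivity : (0:ℝ) ≤ 3 * C ^ 5),
        mul_nonneg (mul_nonneg (by positivity : (0:ℝ) ≤ C ^ 7) hDnpos.le) (sq_nonneg kr)]
    have ukey := le_of_mul_le_mul_right (le_trans (le_trans u1 u2) u3) hY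
    rw [div_le_div_iff₀ hDnpos (by positivity : (0:ℝ) < jr ^ 2)]
    linarith [ukey]

/-- First half of Lemma 2.8: for `C ≥ 1` there is `C' ≥ 1` (depending only on `C`) such that
if `k ≥ 4`, `a = ⌊k/2⌋`, and `-1 = s_0 < … < s_k = 1` have gaps comparable to `2/k` (with
constant `C`), then the left Möbius branch
`ψ(x) = s_a - (1 + s_a)·ζ_a((s_a - x)/(1 + s_a))`, with `ζ_a(u) = u/(a - (a-1)u)`, satisfies
`1/(C'·j²) ≤ ψ(s_j) - ψ(s_{j-1}) ≤ C'/j²` for all `1 ≤ j ≤ a`. -/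
theorem mobius_branch_parabolic_distribution (C : ℝ) (hC : 1 ≤ C) :
    ∃ C' : ℝ, 1 ≤ C' ∧ ∀ k : ℕ, 4 ≤ k → ∀ s : ℕ → ℝ,
      s 0 = -1 → s k = 1 →
      (∀ j : ℕ, 1 ≤ j → j ≤ k →
        2 / (C * (k : ℝ)) ≤ s j - s (j - 1) ∧ s j - s (j - 1) ≤ 2 * C / (k : ℝ)) →
      let a : ℕ := k / 2
      let ζ : ℝ → ℝ := fun u => u / ((a : ℝ) - ((a : ℝ) - 1) * u)
      let ψ : ℝ → ℝ := fun x => s a - (1 + s a) * ζ ((s a - x) / (1 + s a))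
      ∀ j : ℕ, 1 ≤ j → j ≤ a →
        1 / (C' * (j : ℝ) ^ 2) ≤ ψ (s j) - ψ (s (j - 1)) ∧
          ψ (s j) - ψ (s (j - 1)) ≤ C' / (j : ℝ) ^ 2 := by
  have hC0 : (0:ℝ) < C := lt_of_lt_of_le one_pos hC
  refine ⟨8 * C ^ 5, ?_, ?_⟩
  · have h1 : (1:ℝ) ^ 5 ≤ C ^ 5 := pow_le_pow_left₀ zero_le_one hC 5
    nlinarith
  intro k hk s hs0 hsk hgap a ζ ψ j hj1 hja
  have ha : a = k / 2 := rfl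
  have ha2 : 2 ≤ a := by omega
  have hak : a ≤ k := by omega
  have hjk : j ≤ k := le_trans hja hak
  have hk0 : (0:ℝ) < (k:ℝ) := by
    have h : 0 < k := by omega
    exact_mod_cast h
  have hCk : (0:ℝ) < C * (k:ℝ) := by positivity
  have har2 : (2:ℝ) ≤ (a:ℝ) := by exact_mod_cast ha2
  have har0 : (0:ℝ) < (a:ℝ) := by linarith
  have hkle : (k:ℝ) ≤ 2 * (a:ℝ) + 1 := by
    have h : k ≤ 2 * a + 1 := by omega
    exact_mod_cast h
  have hkge : 2 * (a:ℝ) ≤ (k:ℝ) := by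
    have h : 2 * a ≤ k := by omega
    exact_mod_cast h
  have hjr1 : (1:ℝ) ≤ (j:ℝ) := by exact_mod_cast hj1
  have hjra : (j:ℝ) ≤ (a:ℝ) := by exact_mod_cast hja
  have hj0 : (0:ℝ) < (j:ℝ) := lt_of_lt_of_le one_pos hjr1
  have hj1c : ((j - 1 : ℕ) : ℝ) = (j:ℝ) - 1 := by
    rw [Nat.cast_sub hj1, Nat.cast_one]
  -- telescoping bounds
  have tele : ∀ m i : ℕ, i + m ≤ k →
      2 * (m:ℝ) / (C * k) ≤ s (i + m) - s i ∧ s (i + m) - s i ≤ 2 * C * (m:ℝ) / k := by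
    intro m
    induction m with
    | zero => intro i _; norm_num
    | succ n ih =>
      intro i hik
      obtain ⟨h1l, h1u⟩ := ih i (by omega)
      obtain ⟨h2l, h2u⟩ := hgap (i + n + 1) (by omega) (by omega)
      have hred : i + n + 1 - 1 = i + n := by omega
      rw [hred] at h2l h2u
      have hidx : i + (n + 1) = i + n + 1 := by omega
      rw [hidx]
      have e1 : 2 * ((n:ℝ) + 1) / (C * k) = 2 * (n:ℝ) / (C * k) + 2 / (C * k) := by ring
      have e2 : 2 * C * ((n:ℝ) + 1) / k = 2 * C * (n:ℝ) / k + 2 * C / k := by ring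
      constructor
      · push_cast; rw [e1]; linarith
      · push_cast; rw [e2]; linarith
  -- instantiate
  have hgj := hgap j hj1 hjk
  have hT := tele a 0 (by omega)
  rw [zero_add, hs0] at hT
  have hTl : 2 * (a:ℝ) / (C * k) ≤ 1 + s a := by have := hT.1; linarith
  have hTu : 1 + s a ≤ 2 * C * (a:ℝ) / k := by have := hT.2; linarith
  have hBj := tele j 0 (by omega)
  rw [zero_add, hs0] at hBj
  have hBjl : 2 * (j:ℝ) / (C * k) ≤ 1 + s j := by have := hBj.1; linarith
  have hBju : 1 + s j ≤ 2 * C * (j:ℝ) / k := by have := hBj.2; linarith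
  have hBj1 := tele (j - 1) 0 (by omega)
  rw [zero_add, hs0, hj1c] at hBj1
  have hBj1l : 2 * ((j:ℝ) - 1) / (C * k) ≤ 1 + s (j - 1) := by have := hBj1.1; linarith
  have hBj1u : 1 + s (j - 1) ≤ 2 * C * ((j:ℝ) - 1) / k := by have := hBj1.2; linarith
  have hAj := tele (a - j) j (by omega)
  rw [show j + (a - j) = a by omega, Nat.cast_sub hja] at hAj
  have hAj1 := tele (a - (j - 1)) (j - 1) (by omega)
  rw [show (j - 1) + (a - (j - 1)) = a by omega, Nat.cast_sub (by omega : j - 1 ≤ a),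
    hj1c] at hAj1
  -- multiplied forms
  have hg1 : 2 ≤ (s j - s (j - 1)) * (C * k) := by
    have := (div_le_iff₀ hCk).mp hgj.1; linarith
  have hg2 : (s j - s (j - 1)) * k ≤ 2 * C := by
    have := (le_div_iff₀ hk0).mp hgj.2; linarith
  have hT1 : 2 * (a:ℝ) ≤ (1 + s a) * (C * k) := (div_le_iff₀ hCk).mp hTl
  have hT2 : (1 + s a) * k ≤ 2 * C * (a:ℝ) := (le_div_iff₀ hk0).mp hTu
  have hB1 : 2 * (j:ℝ) ≤ (1 + s j) * (C * k) := (div_le_iff₀ hCk).mp hBjl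
  have hB2 : (1 + s j) * k ≤ 2 * C * (j:ℝ) := (le_div_iff₀ hk0).mp hBju
  have hB'1 : 2 * ((j:ℝ) - 1) ≤ (1 + s (j - 1)) * (C * k) := (div_le_iff₀ hCk).mp hBj1l
  have hB'2 : (1 + s (j - 1)) * k ≤ 2 * C * ((j:ℝ) - 1) := (le_div_iff₀ hk0).mp hBj1u
  have hA1 : 2 * ((a:ℝ) - (j:ℝ)) ≤ (s a - s j) * (C * k) := (div_le_iff₀ hCk).mp hAj.1
  have hA2 : (s a - s j) * k ≤ 2 * C * ((a:ℝ) - (j:ℝ)) := (le_div_iff₀ hk0).mp hAj.2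
  have hA'1 : 2 * ((a:ℝ) - ((j:ℝ) - 1)) ≤ (s a - s (j - 1)) * (C * k) :=
    (div_le_iff₀ hCk).mp hAj1.1
  have hA'2 : (s a - s (j - 1)) * k ≤ 2 * C * ((a:ℝ) - ((j:ℝ) - 1)) :=
    (le_div_iff₀ hk0).mp hAj1.2
  -- positivity needed for the algebraic identity
  have hTpos : 0 < 1 + s a :=
    mbpd_pos_left hCk (lt_of_lt_of_le (by positivity) hT1)
  have hPpos : 0 < (a:ℝ) * (1 + s j) + (s a - s j) :=
    mbpd_pos_left hCk (lt_of_lt_of_le (by positivity)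
      (mbpd_P_lower har0 hjra hB1 hA1))
  have hQpos : 0 < (a:ℝ) * (1 + s (j - 1)) + (s a - s (j - 1)) :=
    mbpd_pos_left hCk (lt_of_lt_of_le (by positivity)
      (mbpd_Q_lower har2 hjr1 hB'1 (by
        have : (a:ℝ) - ((j:ℝ) - 1) = (a:ℝ) - (j:ℝ) + 1 := by ring
        rw [this] at hA'1; exact hA'1)))
  -- the key identity
  have hdj : (a:ℝ) - ((a:ℝ) - 1) * ((s a - s j) / (1 + s a)) =
      ((a:ℝ) * (1 + s j) + (s a - s j)) / (1 + s a) := by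
    field_simp
    ring
  have hdj1 : (a:ℝ) - ((a:ℝ) - 1) * ((s a - s (j - 1)) / (1 + s a)) =
      ((a:ℝ) * (1 + s (j - 1)) + (s a - s (j - 1))) / (1 + s a) := by
    field_simp
    ring
  have hE : ψ (s j) - ψ (s (j - 1)) =
      (a:ℝ) * (s j - s (j - 1)) * (1 + s a) ^ 2 /
        (((a:ℝ) * (1 + s j) + (s a - s j)) * ((a:ℝ) * (1 + s (j - 1)) + (s a - s (j - 1)))) := by
    show (s a - (1 + s a) * ((s a - s j) / (1 + s a) /
        ((a:ℝ) - ((a:ℝ) - 1) * ((s a - s j) / (1 + s a))))) -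
      (s a - (1 + s a) * ((s a - s (j - 1)) / (1 + s a) /
        ((a:ℝ) - ((a:ℝ) - 1) * ((s a - s (j - 1)) / (1 + s a))))) = _
    rw [hdj, hdj1]
    field_simp
    ring
  rw [hE]
  have hA'1' : 2 * ((a:ℝ) - (j:ℝ) + 1) ≤ (s a - s (j - 1)) * (C * (k:ℝ)) := by
    have : (a:ℝ) - ((j:ℝ) - 1) = (a:ℝ) - (j:ℝ) + 1 := by ring
    rw [this] at hA'1; exact hA'1
  have hA'2' : (s a - s (j - 1)) * (k:ℝ) ≤ 2 * C * ((a:ℝ) - (j:ℝ) + 1) := by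
    have : (a:ℝ) - ((j:ℝ) - 1) = (a:ℝ) - (j:ℝ) + 1 := by ring
    rw [this] at hA'2; exact hA'2
  exact mbpd_key C (a:ℝ) (j:ℝ) (k:ℝ) (s j - s (j - 1)) (1 + s a) (1 + s j) (1 + s (j - 1))
    (s a - s j) (s a - s (j - 1)) hC har2 hjr1 hjra hkle hkge hk0 hg1 hg2 hT1 hT2
    hB1 hB2 hB'1 hB'2 hA1 hA2 hA'1' hA'2'
end
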